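/- Suppose A = A_1 ⊞_s A_2 with blocks of sizes g and h, A y ᵀ = 1ᵀ, A_1 zᵀ = 1ᵀ, A_2 z'ᵀ = 1ᵀ, and 1 - s²(Σz_i)(Σz'_i) ≠ 0. Then Σ_{i=1}^g y_i = (Σ z_i - s Σ z_i Σ z'_i)/(1 - s² Σ z_i Σ z'_i), Σ_{i=g+1}^j y_i = (Σ z'_i - s Σ z_i Σ z'_i)/(1 - s² Σ z_i Σ z'_i), and hence Σ_{i=1}^j y_i = (Σ z_i + Σ z'_i - 2s Σ z_i Σ z'_i)/(1 - s² Σ z_i Σ z'_i). -/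

import Mathlib

/-!
Pairing the first block row of `(A₁ ⊞_s A₂) y = 1` with `z` and using the symmetry of `A₁`
gives `Y₁ = (1 - s Y₂) Z`, where `Y₁, Y₂, Z, Z'` are the sums of the two halves of `y`, of `z`
and of `z'`; likewise `Y₂ = (1 - s Y₁) Z'`. Solving this 2 × 2 linear system gives the formulas.
-/

/-- Membership in the class `M_j` of ultrametric matrices from the paper. -/
def MemUltra (η : ℝ) {ι : Type*} [Fintype ι] [DecidableEq ι] (A : Matrix ι ι ℝ) : Prop :=
  A.IsSymm ∧ (∀ i, A i i = 1) ∧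
  (∀ i l, i ≠ l → 0 ≤ A i l ∧ A i l ≤ 1 - η) ∧
  (∀ i l p, i ≠ l → l ≠ p → i ≠ p → min (A l p) (A i p) ≤ A i l)

/-- The block sum `A₁ ⊞_s A₂`. -/
def blockSum {g h : ℕ} (A₁ : Matrix (Fin g) (Fin g) ℝ) (A₂ : Matrix (Fin h) (Fin h) ℝ)
    (s : ℝ) : Matrix (Fin g ⊕ Fin h) (Fin g ⊕ Fin h) ℝ :=
  Matrix.fromBlocks A₁ (Matrix.of fun _ _ => s) (Matrix.of fun _ _ => s) A₂

open Matrix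

theorem Matrix.IsSymm.sum_eq_mul_sum {n R : Type*} [Fintype n] [CommSemiring R]
    {A : Matrix n n R} (hA : A.IsSymm) {x z : n → R} {c : R}
    (hx : A *ᵥ x = fun _ => c) (hz : A *ᵥ z = fun _ => 1) :
    ∑ i, x i = c * ∑ i, z i :=
  calc ∑ i, x i = (A *ᵥ z) ⬝ᵥ x := by rw [hz]; exact (one_dotProduct x).symm
    _ = z ⬝ᵥ (A *ᵥ x) := by rw [dotProduct_mulVec, ← mulVec_transpose, hA.eq]
    _ = c * ∑ i, z i := by rw [hx, Finset.mul_sum]; simp only [dotProduct, mul_comm]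

theorem blockSum_mulVec {g h : ℕ} (A₁ : Matrix (Fin g) (Fin g) ℝ) (A₂ : Matrix (Fin h) (Fin h) ℝ)
    (s : ℝ) (y : Fin g ⊕ Fin h → ℝ) :
    blockSum A₁ A₂ s *ᵥ y =
      Sum.elim (A₁ *ᵥ (y ∘ Sum.inl) + fun _ => s * ∑ i, y (Sum.inr i))
        (A₂ *ᵥ (y ∘ Sum.inr) + fun _ => s * ∑ i, y (Sum.inl i)) := by
  rw [blockSum, fromBlocks_mulVec, add_comm (of _ *ᵥ _)]
  congr <;> ext <;> simp [mulVec, dotProduct, Finset.mul_sum]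

theorem blockSum_mulVec_eq_one_iff {g h : ℕ} (A₁ : Matrix (Fin g) (Fin g) ℝ)
    (A₂ : Matrix (Fin h) (Fin h) ℝ) (s : ℝ) (y : Fin g ⊕ Fin h → ℝ) :
    blockSum A₁ A₂ s *ᵥ y = (fun _ => 1) ↔
      A₁ *ᵥ (y ∘ Sum.inl) = (fun _ => 1 - s * ∑ i, y (Sum.inr i)) ∧
        A₂ *ᵥ (y ∘ Sum.inr) = (fun _ => 1 - s * ∑ i, y (Sum.inl i)) := by
  simp only [blockSum_mulVec, funext_iff, Sum.forall, Sum.elim_inl, Sum.elim_inr, Pi.add_apply,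
    eq_sub_iff_add_eq]

theorem blockSum_solution_sums {η : ℝ} {g h : ℕ}
    (A₁ : Matrix (Fin g) (Fin g) ℝ) (A₂ : Matrix (Fin h) (Fin h) ℝ)
    (hA₁ : MemUltra η A₁) (hA₂ : MemUltra η A₂) (s : ℝ)
    (y : Fin g ⊕ Fin h → ℝ) (z : Fin g → ℝ) (z' : Fin h → ℝ)
    (hy : (blockSum A₁ A₂ s).mulVec y = fun _ => 1)
    (hz : A₁.mulVec z = fun _ => 1)
    (hz' : A₂.mulVec z' = fun _ => 1)
    (hden : 1 - s ^ 2 * (∑ i, z i) * (∑ i, z' i) ≠ 0) :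
    (∑ i, y (Sum.inl i)) =
      ((∑ i, z i) - s * (∑ i, z i) * (∑ i, z' i)) /
        (1 - s ^ 2 * (∑ i, z i) * (∑ i, z' i)) ∧
    (∑ i, y (Sum.inr i)) =
      ((∑ i, z' i) - s * (∑ i, z i) * (∑ i, z' i)) /
        (1 - s ^ 2 * (∑ i, z i) * (∑ i, z' i)) ∧
    (∑ p, y p) =
      ((∑ i, z i) + (∑ i, z' i) - 2 * s * (∑ i, z i) * (∑ i, z' i)) /
        (1 - s ^ 2 * (∑ i, z i) * (∑ i, z' i)) := by
  obtain ⟨hy₁, hy₂⟩ := (blockSum_mulVec_eq_one_iff A₁ A₂ s y).mp hy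
  have hY₁ := hA₁.1.sum_eq_mul_sum hy₁ hz
  have hY₂ := hA₂.1.sum_eq_mul_sum hy₂ hz'
  simp only [Function.comp_apply] at hY₁ hY₂
  rw [Fintype.sum_sum_type, eq_div_iff hden, eq_div_iff hden, eq_div_iff hden]
  refine ⟨?_, ?_, ?_⟩
  · linear_combination hY₁ - s * (∑ i, z i) * hY₂
  · linear_combination hY₂ - s * (∑ i, z' i) * hY₁
  · linear_combination (1 - s * ∑ i, z' i) * hY₁ + (1 - s * ∑ i, z i) * hY₂
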